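/- Let G and H be regular graphs with degrees d_G and d_H. Let x1x2 ∈ E(G) and y1y2 ∈ E(H). Define the map φ3 sending (x,y) to (x, φ2(y)) if x ∉ R_{x1}(x1,x2) and y ∈ R_{y1}(y1,y2); to (φ1(x), y) if x ∈ R_{x1}(x1,x2) and y ∉ R_{y1}(y1,y2); and to (φ1(x), φ2(y)) if x ∈ R_{x1}(x1,x2) and y ∈ R_{y1}(y1,y2), where φ1, φ2 are optimal assignments for (x1,x2) in G and (y1,y2) in H respectively. Then φ3 is a bijection between R_{(x1,y1)}((x1,y1),(x2,y2)) and R_{(x2,y2)}((x1,y1),(x2,y2)) in G ⊠ H, with total cost at most (d_G+1)·OPT_H + (d_H+1)·OPT_G − |R_{x1}(x1,x2)|·|R_{y1}(y1,y2)|. -/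

import Mathlib

open SimpleGraph Filter Set

noncomputable section
attribute [local instance] Classical.propDecidable

variable {V α β : Type*}

/-- The strong product of two simple graphs. -/
def StrongProd (G : SimpleGraph α) (H : SimpleGraph β) : SimpleGraph (α × β) where
  Adj p q := p ≠ q ∧ (p.1 = q.1 ∨ G.Adj p.1 q.1) ∧ (p.2 = q.2 ∨ H.Adj p.2 q.2)
  symm := by
    constructor
    rintro p q ⟨h1, h2, h3⟩
    exact ⟨h1.symm, h2.imp Eq.symm Adj.symm, h3.imp Eq.symm Adj.symm⟩
  loopless := ⟨fun p h => h.1 rfl⟩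

/-- Closed neighborhood N[x]. -/
def closedNbr (G : SimpleGraph V) (x : V) : Set V := insert x (G.neighborSet x)

/-- The set R_x(x,y) = N(x) \ ((N(x) ∩ N(y)) ∪ {y}). -/
def Rside (G : SimpleGraph V) (x y : V) : Set V :=
  G.neighborSet x \ ((G.neighborSet x ∩ G.neighborSet y) ∪ {y})

/-- Total transport cost of an assignment (bijection) between R_x(x,y) and R_y(x,y). -/
def cost (G : SimpleGraph V) (x y : V) (φ : Rside G x y ≃ Rside G y x) : ℝ :=
  ∑' z : Rside G x y, (G.dist z.1 (φ z).1 : ℝ)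

/-- The optimal (minimal) total transport cost over all assignments. -/
def OPTc (G : SimpleGraph V) (x y : V) : ℝ :=
  sInf { c | ∃ φ : Rside G x y ≃ Rside G y x, c = cost G x y φ }

/-- An assignment is optimal if it attains the minimal total cost. -/
def IsOptimal (G : SimpleGraph V) (x y : V) (φ : Rside G x y ≃ Rside G y x) : Prop :=
  cost G x y φ = OPTc G x y

/-- The largest displacement appearing in an optimal assignment, maximized over
optimal assignments. -/
def MAXc (G : SimpleGraph V) (x y : V) : ℝ :=
  sSup { m | ∃ φ : Rside G x y ≃ Rside G y x, IsOptimal G x y φ ∧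
    m = ⨆ z : Rside G x y, (G.dist z.1 (φ z).1 : ℝ) }

/-- The measure μ_x^α. -/
def muMeas (G : SimpleGraph V) [G.LocallyFinite] (α : ℝ) (x : V) : V → ℝ :=
  fun z => if z = x then α else if G.Adj x z then (1 - α) / (G.degree x) else 0

/-- Wasserstein (optimal transport) distance between two measures with respect to
the graph distance. -/
def Wass (G : SimpleGraph V) (μ ν : V → ℝ) : ℝ :=
  sInf { c | ∃ π : V → V → ℝ, (∀ u v, 0 ≤ π u v) ∧
    (∀ u, ∑' v, π u v = μ u) ∧ (∀ v, ∑' u, π u v = ν v) ∧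
    c = ∑' u, ∑' v, (G.dist u v : ℝ) * π u v }

/-- The α-Ricci (Ollivier) curvature of an edge xy. -/
def kap (G : SimpleGraph V) [G.LocallyFinite] (α : ℝ) (x y : V) : ℝ :=
  1 - Wass G (muMeas G α x) (muMeas G α y)

/-- Ollivier Ricci curvature with idleness 0. -/
def kap0 (G : SimpleGraph V) [G.LocallyFinite] (x y : V) : ℝ := kap G 0 x y

/-- `IsLLY G x y k` says that the Lin–Lu–Yau curvature of the edge xy exists and
equals k, i.e. κ_α(x,y)/(1-α) → k as α → 1⁻. -/
def IsLLY (G : SimpleGraph V) [G.LocallyFinite] (x y : V) (k : ℝ) : Prop :=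
  Tendsto (fun α => kap G α x y / (1 - α)) (nhdsWithin 1 (Set.Iio 1)) (nhds k)


/- ### auxiliary lemmas -/

lemma mem_Rside {G : SimpleGraph V} {x y z : V} :
    z ∈ Rside G x y ↔ G.Adj x z ∧ ¬ G.Adj y z ∧ z ≠ y := by
  simp only [Rside, Set.mem_diff, Set.mem_union, Set.mem_inter_iff, mem_neighborSet,
    Set.mem_singleton_iff]
  tauto

lemma mem_closedNbr {G : SimpleGraph V} {x z : V} :
    z ∈ closedNbr G x ↔ z = x ∨ G.Adj x z := by
  simp [closedNbr]

lemma Rside_subset_closedNbr {G : SimpleGraph V} {x y : V} :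
    Rside G x y ⊆ closedNbr G x := fun z hz => mem_closedNbr.2 (Or.inr (mem_Rside.1 hz).1)

lemma Rside_disj_closedNbr {G : SimpleGraph V} {x y z : V} (h : z ∈ Rside G y x) :
    z ∉ closedNbr G x := by
  rcases mem_Rside.1 h with ⟨_, h2, h3⟩
  rw [mem_closedNbr]; rintro (rfl | h4); exact h3 rfl; exact h2 h4

lemma mem_closedNbr_of_not_Rside {G : SimpleGraph V} {x y z : V} (hxy : G.Adj x y)
    (h1 : z ∈ closedNbr G x) (h2 : z ∉ Rside G x y) : z ∈ closedNbr G y := by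
  rcases mem_closedNbr.1 h1 with rfl | h1
  · exact mem_closedNbr.2 (Or.inr hxy.symm)
  · rw [mem_Rside] at h2
    push_neg at h2
    rcases Classical.em (G.Adj y z) with h | h
    · exact mem_closedNbr.2 (Or.inr h)
    · exact mem_closedNbr.2 (Or.inl (h2 h1 h))

lemma Rside_prod {G : SimpleGraph α} {H : SimpleGraph β} {x1 x2 : α} {y1 y2 : β}
    (hx : G.Adj x1 x2) (hy : H.Adj y1 y2) :
    Rside (StrongProd G H) (x1, y1) (x2, y2) =
      (Rside G x1 x2 ×ˢ closedNbr H y1) ∪ (closedNbr G x1 ×ˢ Rside H y1 y2) := by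
  ext ⟨a, c⟩
  simp only [mem_Rside, Set.mem_union, Set.mem_prod, StrongProd, mem_closedNbr]
  constructor
  · rintro ⟨⟨hne, ha, hc⟩, hnadj, hne2⟩
    have key : ¬ (a = x2 ∨ G.Adj x2 a) ∨ ¬ (c = y2 ∨ H.Adj y2 c) := by
      by_contra hcon
      push_neg at hcon
      rcases hcon with ⟨h1, h2⟩
      rcases Classical.em ((a, c) = (x2, y2)) with he | he
      · exact hne2 he
      · exact hnadj ⟨fun q => he q.symm, by tauto, by tauto⟩
    rcases key with key | key
    · push_neg at key
      have ha' : G.Adj x1 a := by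
        rcases ha with rfl | ha
        · exact absurd hx.symm (by simpa using key.2)
        · exact ha
      exact Or.inl ⟨⟨ha', key.2, key.1⟩, hc.imp Eq.symm id⟩
    · push_neg at key
      have hc' : H.Adj y1 c := by
        rcases hc with rfl | hc
        · exact absurd hy.symm (by simpa using key.2)
        · exact hc
      exact Or.inr ⟨ha.imp Eq.symm id, ⟨hc', key.2, key.1⟩⟩
  · rintro (⟨ha, hc⟩ | ⟨ha, hc⟩)
    · rcases ha with ⟨ha1, ha2, ha3⟩
      refine ⟨⟨?_, Or.inr ha1, ?_⟩, ?_, ?_⟩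
      · intro he; exact ha1.ne (congrArg Prod.fst he)
      · rcases hc with h | h; exact Or.inl h.symm; exact Or.inr h
      · rintro ⟨_, h2, _⟩; rcases h2 with h2 | h2
        · exact ha3 h2.symm
        · exact ha2 h2
      · intro he; exact ha3 (congrArg Prod.fst he)
    · rcases hc with ⟨hc1, hc2, hc3⟩
      refine ⟨⟨?_, ?_, Or.inr hc1⟩, ?_, ?_⟩
      · intro he; exact hc1.ne (congrArg Prod.snd he)
      · rcases ha with h | h; exact Or.inl h.symm; exact Or.inr h
      · rintro ⟨_, _, h3⟩; rcases h3 with h3 | h3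
        · exact hc3 h3.symm
        · exact hc2 h3
      · intro he; exact hc3 (congrArg Prod.snd he)

def liftL {G : SimpleGraph α} (H : SimpleGraph β) (c : β) :
    ∀ {a b : α}, G.Walk a b → (StrongProd G H).Walk (a, c) (b, c)
  | _, _, .nil => .nil
  | a, b, @SimpleGraph.Walk.cons _ _ _ a1 _ h p =>
      Walk.cons (show (StrongProd G H).Adj (a, c) (a1, c) from
        ⟨fun he => h.ne (congrArg Prod.fst he), Or.inr h, Or.inl rfl⟩) (liftL H c p)

def liftR (G : SimpleGraph α) {H : SimpleGraph β} (a : α) :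
    ∀ {c d : β}, H.Walk c d → (StrongProd G H).Walk (a, c) (a, d)
  | _, _, .nil => .nil
  | c, d, @SimpleGraph.Walk.cons _ _ _ c1 _ h p =>
      Walk.cons (show (StrongProd G H).Adj (a, c) (a, c1) from
        ⟨fun he => h.ne (congrArg Prod.snd he), Or.inl rfl, Or.inr h⟩) (liftR G a p)

lemma liftL_length {G : SimpleGraph α} (H : SimpleGraph β) (c : β) {a b : α}
    (w : G.Walk a b) : (liftL H c w).length = w.length := by
  induction w with
  | nil => simp [liftL]
  | cons h p ih => simp [liftL, ih]

lemma liftR_length (G : SimpleGraph α) {H : SimpleGraph β} (a : α) {c d : β}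
    (w : H.Walk c d) : (liftR G a w).length = w.length := by
  induction w with
  | nil => simp [liftR]
  | cons h p ih => simp [liftR, ih]

lemma dist_prod_left {G : SimpleGraph α} {H : SimpleGraph β} {a b : α} (c : β)
    (h : G.Reachable a b) : (StrongProd G H).dist (a, c) (b, c) ≤ G.dist a b := by
  obtain ⟨w, hw⟩ := h.exists_walk_length_eq_dist
  calc (StrongProd G H).dist (a, c) (b, c) ≤ (liftL H c w).length := dist_le _
    _ = G.dist a b := by rw [liftL_length, hw]

lemma dist_prod_right {G : SimpleGraph α} {H : SimpleGraph β} (a : α) {c d : β}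
    (h : H.Reachable c d) : (StrongProd G H).dist (a, c) (a, d) ≤ H.dist c d := by
  obtain ⟨w, hw⟩ := h.exists_walk_length_eq_dist
  calc (StrongProd G H).dist (a, c) (a, d) ≤ (liftR G a w).length := dist_le _
    _ = H.dist c d := by rw [liftR_length, hw]

lemma dist_prod_diag {G : SimpleGraph α} {H : SimpleGraph β} {a b : α} {c d : β}
    (h1 : G.Reachable a b) (h2 : H.Reachable c d) (ha : a ≠ b) (hc : c ≠ d) :
    (StrongProd G H).dist (a, c) (b, d) + 1 ≤ G.dist a b + H.dist c d := by
  obtain ⟨w1, hw1⟩ := h1.exists_walk_length_eq_dist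
  obtain ⟨w2, hw2⟩ := h2.exists_walk_length_eq_dist
  cases w1 with
  | nil => exact absurd rfl ha
  | cons hadj1 p =>
    cases w2 with
    | nil => exact absurd rfl hc
    | cons hadj2 q =>
      rename_i a1 c1
      have hd : (StrongProd G H).Adj (a, c) (a1, c1) :=
        ⟨fun he => hadj1.ne (congrArg Prod.fst he), Or.inr hadj1, Or.inr hadj2⟩
      have hle := dist_le (Walk.cons hd ((liftL H c1 p).append (liftR G b q)))
      rw [Walk.length_cons, Walk.length_append, liftL_length, liftR_length] at hle
      simp only [Walk.length_cons] at hw1 hw2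
      omega

/-- The one-sided map built from an assignment. -/
def psiMap (G : SimpleGraph V) (x1 x2 : V) (φ : Rside G x1 x2 ≃ Rside G x2 x1) : V → V :=
  fun a => if h : a ∈ Rside G x1 x2 then (φ ⟨a, h⟩).1 else a

/-- The one-sided cost function. -/
def hCost (G : SimpleGraph V) (x1 x2 : V) (φ : Rside G x1 x2 ≃ Rside G x2 x1) : V → ℝ :=
  fun a => if h : a ∈ Rside G x1 x2 then (G.dist a (φ ⟨a, h⟩).1 : ℝ) else 0

lemma psiMap_of_mem {G : SimpleGraph V} {x1 x2 : V} (φ : Rside G x1 x2 ≃ Rside G x2 x1)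
    {a : V} (ha : a ∈ Rside G x1 x2) : psiMap G x1 x2 φ a = (φ ⟨a, ha⟩).1 := dif_pos ha

lemma psiMap_mem {G : SimpleGraph V} {x1 x2 : V} (φ : Rside G x1 x2 ≃ Rside G x2 x1)
    {a : V} (ha : a ∈ Rside G x1 x2) : psiMap G x1 x2 φ a ∈ Rside G x2 x1 := by
  rw [psiMap_of_mem φ ha]; exact (φ ⟨a, ha⟩).2

lemma psiMap_of_not_mem {G : SimpleGraph V} {x1 x2 : V} (φ : Rside G x1 x2 ≃ Rside G x2 x1)
    {a : V} (ha : a ∉ Rside G x1 x2) : psiMap G x1 x2 φ a = a := dif_neg ha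

lemma psiMap_symm {G : SimpleGraph V} {x1 x2 : V} (φ : Rside G x1 x2 ≃ Rside G x2 x1)
    {u : V} (hu : u ∈ Rside G x2 x1) : psiMap G x1 x2 φ ((φ.symm ⟨u, hu⟩) : V) = u := by
  rw [psiMap_of_mem φ (φ.symm ⟨u, hu⟩).2, Subtype.coe_eta, Equiv.apply_symm_apply]

lemma psiMap_injOn {G : SimpleGraph V} {x1 x2 : V} (φ : Rside G x1 x2 ≃ Rside G x2 x1)
    {a b : V} (ha : a ∈ closedNbr G x1) (hb : b ∈ closedNbr G x1)
    (h : psiMap G x1 x2 φ a = psiMap G x1 x2 φ b) : a = b := by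
  by_cases h1 : a ∈ Rside G x1 x2 <;> by_cases h2 : b ∈ Rside G x1 x2
  · rw [psiMap_of_mem φ h1, psiMap_of_mem φ h2] at h
    exact Subtype.mk_eq_mk.1 (φ.injective (Subtype.ext h))
  · rw [psiMap_of_mem φ h1, psiMap_of_not_mem φ h2] at h
    exact absurd (h ▸ hb) (Rside_disj_closedNbr (φ ⟨a, h1⟩).2)
  · rw [psiMap_of_not_mem φ h1, psiMap_of_mem φ h2] at h
    exact absurd (h ▸ ha) (Rside_disj_closedNbr (φ ⟨b, h2⟩).2)
  · rwa [psiMap_of_not_mem φ h1, psiMap_of_not_mem φ h2] at h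

lemma reach_of_Rsides {G : SimpleGraph V} {x1 x2 a b : V} (hx : G.Adj x1 x2)
    (ha : a ∈ Rside G x1 x2) (hb : b ∈ Rside G x2 x1) : G.Reachable a b :=
  ((mem_Rside.1 ha).1.symm.reachable).trans
    (hx.reachable.trans (mem_Rside.1 hb).1.reachable)

lemma ne_of_Rsides {G : SimpleGraph V} {x1 x2 a b : V}
    (ha : a ∈ Rside G x1 x2) (hb : b ∈ Rside G x2 x1) : a ≠ b := by
  rintro rfl
  exact (mem_Rside.1 hb).2.1 (mem_Rside.1 ha).1

lemma sum_hCost [Fintype V] {G : SimpleGraph V} {x1 x2 : V}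
    (φ : Rside G x1 x2 ≃ Rside G x2 x1) :
    ∑ a ∈ (Rside G x1 x2).toFinset, hCost G x1 x2 φ a = cost G x1 x2 φ := by
  rw [cost, tsum_fintype,
    Finset.sum_subtype (Rside G x1 x2).toFinset (fun x => Set.mem_toFinset) (hCost G x1 x2 φ)]
  exact Fintype.sum_congr _ _ fun z => by
    rcases z with ⟨a, ha⟩; simp [hCost, dif_pos ha]

lemma card_closedNbr_toFinset [Fintype V] (G : SimpleGraph V) (x : V) :
    (closedNbr G x).toFinset.card = G.degree x + 1 := by
  rw [show (closedNbr G x).toFinset = insert x (G.neighborSet x).toFinset by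
      ext z; rw [Set.mem_toFinset]; simp [closedNbr]]
  rw [Finset.card_insert_of_notMem (by simp), Set.toFinset_card,
    card_neighborSet_eq_degree]

theorem phi3_bijOn_and_cost_bound [Fintype α] [Fintype β] (G : SimpleGraph α)
    (H : SimpleGraph β) (dG dH : ℕ)
    (hG : G.IsRegularOfDegree dG) (hH : H.IsRegularOfDegree dH)
    (x1 x2 : α) (hx : G.Adj x1 x2) (y1 y2 : β) (hy : H.Adj y1 y2)
    (φ1 : Rside G x1 x2 ≃ Rside G x2 x1) (hφ1 : IsOptimal G x1 x2 φ1)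
    (φ2 : Rside H y1 y2 ≃ Rside H y2 y1) (hφ2 : IsOptimal H y1 y2 φ2) :
    Set.BijOn
      (fun p : α × β =>
        ((if h : p.1 ∈ Rside G x1 x2 then (φ1 ⟨p.1, h⟩).1 else p.1),
         (if h : p.2 ∈ Rside H y1 y2 then (φ2 ⟨p.2, h⟩).1 else p.2)))
      (Rside (StrongProd G H) (x1, y1) (x2, y2))
      (Rside (StrongProd G H) (x2, y2) (x1, y1)) ∧
    (∑' z : Rside (StrongProd G H) (x1, y1) (x2, y2),
        ((StrongProd G H).dist z.1
          ((if h : z.1.1 ∈ Rside G x1 x2 then (φ1 ⟨z.1.1, h⟩).1 else z.1.1),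
           (if h : z.1.2 ∈ Rside H y1 y2 then (φ2 ⟨z.1.2, h⟩).1 else z.1.2)) : ℝ))
      ≤ ((dG : ℝ) + 1) * OPTc H y1 y2 + ((dH : ℝ) + 1) * OPTc G x1 x2
        - (Nat.card ↥(Rside G x1 x2) : ℝ) * (Nat.card ↥(Rside H y1 y2) : ℝ) := by
  have hSeq := Rside_prod hx hy
  have hTeq := Rside_prod hx.symm hy.symm
  -- membership extraction for the source set
  have hz1 : ∀ z ∈ Rside (StrongProd G H) (x1, y1) (x2, y2),
      z.1 ∈ closedNbr G x1 ∧ z.2 ∈ closedNbr H y1 ∧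
        (z.1 ∈ Rside G x1 x2 ∨ z.2 ∈ Rside H y1 y2) := by
    intro z hz
    rw [hSeq] at hz
    rcases hz with ⟨h1, h2⟩ | ⟨h1, h2⟩
    · exact ⟨Rside_subset_closedNbr h1, h2, Or.inl h1⟩
    · exact ⟨h1, Rside_subset_closedNbr h2, Or.inr h2⟩
  constructor
  · -- bijectivity
    show Set.BijOn (fun p : α × β => (psiMap G x1 x2 φ1 p.1, psiMap H y1 y2 φ2 p.2)) _ _
    refine ⟨?_, ?_, ?_⟩
    · -- MapsTo
      intro z hz
      obtain ⟨hzx, hzy, _hzor⟩ := hz1 z hz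
      rw [hTeq]
      rw [hSeq] at hz
      show (psiMap G x1 x2 φ1 z.1, psiMap H y1 y2 φ2 z.2) ∈ _
      by_cases ha : z.1 ∈ Rside G x1 x2 <;> by_cases hc : z.2 ∈ Rside H y1 y2
      · exact Or.inl ⟨psiMap_mem φ1 ha, Rside_subset_closedNbr (psiMap_mem φ2 hc)⟩
      · refine Or.inl ⟨psiMap_mem φ1 ha, ?_⟩
        show psiMap H y1 y2 φ2 z.2 ∈ _
        rw [psiMap_of_not_mem φ2 hc]
        exact mem_closedNbr_of_not_Rside hy hzy hc
      · refine Or.inr ⟨?_, psiMap_mem φ2 hc⟩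
        show psiMap G x1 x2 φ1 z.1 ∈ _
        rw [psiMap_of_not_mem φ1 ha]
        exact mem_closedNbr_of_not_Rside hx hzx ha
      · rcases hz with ⟨h1, _⟩ | ⟨_, h2⟩
        · exact absurd h1 ha
        · exact absurd h2 hc
    · -- InjOn
      intro p hp q hq h
      obtain ⟨hp1, hp2, -⟩ := hz1 p hp
      obtain ⟨hq1, hq2, -⟩ := hz1 q hq
      have h1 := congrArg Prod.fst h
      have h2 := congrArg Prod.snd h
      exact Prod.ext (psiMap_injOn φ1 hp1 hq1 h1) (psiMap_injOn φ2 hp2 hq2 h2)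
    · -- SurjOn
      intro w hw
      rw [hTeq] at hw
      by_cases hu : w.1 ∈ Rside G x2 x1 <;> by_cases hv : w.2 ∈ Rside H y2 y1
      · refine ⟨((φ1.symm ⟨w.1, hu⟩ : α), (φ2.symm ⟨w.2, hv⟩ : β)), ?_, ?_⟩
        · rw [hSeq]
          exact Or.inl ⟨(φ1.symm ⟨w.1, hu⟩).2, Rside_subset_closedNbr (φ2.symm ⟨w.2, hv⟩).2⟩
        · exact Prod.ext (psiMap_symm φ1 hu) (psiMap_symm φ2 hv)
      · -- w.2 ∈ N[y2] \ Rside H y2 y1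
        have hw2 : w.2 ∈ closedNbr H y2 := by
          rcases hw with ⟨_, h2⟩ | ⟨_, h2⟩
          · exact h2
          · exact absurd h2 hv
        have hv2 : w.2 ∉ Rside H y1 y2 := fun hm => (Rside_disj_closedNbr hm) hw2
        refine ⟨((φ1.symm ⟨w.1, hu⟩ : α), w.2), ?_, ?_⟩
        · rw [hSeq]
          exact Or.inl ⟨(φ1.symm ⟨w.1, hu⟩).2, mem_closedNbr_of_not_Rside hy.symm hw2 hv⟩
        · exact Prod.ext (psiMap_symm φ1 hu) (psiMap_of_not_mem φ2 hv2)
      · have hw1 : w.1 ∈ closedNbr G x2 := by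
          rcases hw with ⟨h1, _⟩ | ⟨h1, _⟩
          · exact absurd h1 hu
          · exact h1
        have hu2 : w.1 ∉ Rside G x1 x2 := fun hm => (Rside_disj_closedNbr hm) hw1
        refine ⟨(w.1, (φ2.symm ⟨w.2, hv⟩ : β)), ?_, ?_⟩
        · rw [hSeq]
          exact Or.inr ⟨mem_closedNbr_of_not_Rside hx.symm hw1 hu, (φ2.symm ⟨w.2, hv⟩).2⟩
        · exact Prod.ext (psiMap_of_not_mem φ1 hu2) (psiMap_symm φ2 hv)
      · rcases hw with ⟨h1, _⟩ | ⟨_, h2⟩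
        · exact absurd h1 hu
        · exact absurd h2 hv
  · -- cost bound
    show (∑' z : Rside (StrongProd G H) (x1, y1) (x2, y2),
        ((StrongProd G H).dist z.1
          (psiMap G x1 x2 φ1 z.1.1, psiMap H y1 y2 φ2 z.1.2) : ℝ)) ≤ _
    set F : α × β → ℝ := fun z =>
      ((StrongProd G H).dist z (psiMap G x1 x2 φ1 z.1, psiMap H y1 y2 φ2 z.2) : ℝ) with hF
    set g : α × β → ℝ := fun z => hCost G x1 x2 φ1 z.1 + hCost H y1 y2 φ2 z.2 -
      (if z.1 ∈ Rside G x1 x2 ∧ z.2 ∈ Rside H y1 y2 then (1 : ℝ) else 0) with hg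
    have hstep1 : (∑' z : Rside (StrongProd G H) (x1, y1) (x2, y2),
        ((StrongProd G H).dist z.1
          (psiMap G x1 x2 φ1 z.1.1, psiMap H y1 y2 φ2 z.1.2) : ℝ)) =
        ∑ z ∈ (Rside (StrongProd G H) (x1, y1) (x2, y2)).toFinset, F z := by
      rw [tsum_fintype,
        Finset.sum_subtype (Rside (StrongProd G H) (x1, y1) (x2, y2)).toFinset
          (fun x => Set.mem_toFinset) F]
    rw [hstep1]
    -- pointwise bound
    have key : ∀ z ∈ (Rside (StrongProd G H) (x1, y1) (x2, y2)).toFinset, F z ≤ g z := by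
      intro z hz
      rw [Set.mem_toFinset] at hz
      obtain ⟨hzx, hzy, hzor⟩ := hz1 z hz
      by_cases ha : z.1 ∈ Rside G x1 x2 <;> by_cases hc : z.2 ∈ Rside H y1 y2
      · have hb := psiMap_mem φ1 ha
        have hd := psiMap_mem φ2 hc
        have r1 := reach_of_Rsides hx ha hb
        have r2 := reach_of_Rsides hy hc hd
        have n1 := ne_of_Rsides ha hb
        have n2 := ne_of_Rsides hc hd
        have main := dist_prod_diag (G := G) (H := H) r1 r2 n1 n2
        have e1 : hCost G x1 x2 φ1 z.1 = (G.dist z.1 (psiMap G x1 x2 φ1 z.1) : ℝ) := by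
          rw [hCost, psiMap_of_mem φ1 ha]; exact dif_pos ha
        have e2 : hCost H y1 y2 φ2 z.2 = (H.dist z.2 (psiMap H y1 y2 φ2 z.2) : ℝ) := by
          rw [hCost, psiMap_of_mem φ2 hc]; exact dif_pos hc
        rw [hg, hF]
        simp only [e1, e2, if_pos (And.intro ha hc)]
        have hzeta : z = (z.1, z.2) := rfl
        rw [hzeta] at main ⊢
        push_cast
        have : ((StrongProd G H).dist (z.1, z.2)
            (psiMap G x1 x2 φ1 z.1, psiMap H y1 y2 φ2 z.2) : ℝ) + 1 ≤
            (G.dist z.1 (psiMap G x1 x2 φ1 z.1) : ℝ) +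
            (H.dist z.2 (psiMap H y1 y2 φ2 z.2) : ℝ) := by exact_mod_cast main
        linarith
      · have hb := psiMap_mem φ1 ha
        have r1 := reach_of_Rsides hx ha hb
        have main := dist_prod_left (G := G) (H := H) z.2 r1
        have e1 : hCost G x1 x2 φ1 z.1 = (G.dist z.1 (psiMap G x1 x2 φ1 z.1) : ℝ) := by
          rw [hCost, psiMap_of_mem φ1 ha]; exact dif_pos ha
        have e2 : hCost H y1 y2 φ2 z.2 = 0 := dif_neg hc
        rw [hg, hF]
        simp only [e1, e2, if_neg (fun hh : _ ∧ _ => hc hh.2), psiMap_of_not_mem φ2 hc]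
        have hzeta : z = (z.1, z.2) := rfl
        rw [hzeta]
        rw [sub_zero, add_zero]
        exact_mod_cast main
      · have hd := psiMap_mem φ2 hc
        have r2 := reach_of_Rsides hy hc hd
        have main := dist_prod_right (G := G) (H := H) z.1 r2
        have e2 : hCost H y1 y2 φ2 z.2 = (H.dist z.2 (psiMap H y1 y2 φ2 z.2) : ℝ) := by
          rw [hCost, psiMap_of_mem φ2 hc]; exact dif_pos hc
        have e1 : hCost G x1 x2 φ1 z.1 = 0 := dif_neg ha
        rw [hg, hF]
        simp only [e1, e2, if_neg (fun hh : _ ∧ _ => ha hh.1), psiMap_of_not_mem φ1 ha]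
        have hzeta : z = (z.1, z.2) := rfl
        rw [hzeta]
        rw [sub_zero, zero_add]
        exact_mod_cast main
      · rcases hzor with h | h
        · exact absurd h ha
        · exact absurd h hc
    have hsum := Finset.sum_le_sum key
    refine le_trans hsum ?_
    -- compute the sum of g
    have hUeq : (Rside (StrongProd G H) (x1, y1) (x2, y2)).toFinset =
        ((Rside G x1 x2).toFinset ×ˢ (closedNbr H y1).toFinset) ∪
        ((closedNbr G x1).toFinset ×ˢ (Rside H y1 y2).toFinset) := by
      rw [Set.toFinset_congr hSeq, Set.toFinset_union, Set.toFinset_prod, Set.toFinset_prod]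
    rw [hUeq]
    set Af := (Rside G x1 x2).toFinset ×ˢ (closedNbr H y1).toFinset with hAf
    set Bf := (closedNbr G x1).toFinset ×ˢ (Rside H y1 y2).toFinset with hBf
    set Cf := (Rside G x1 x2).toFinset ×ˢ (Rside H y1 y2).toFinset with hCf
    have hsplit : ∑ z ∈ Af ∪ Bf, g z =
        (∑ z ∈ Af ∪ Bf, hCost G x1 x2 φ1 z.1) + (∑ z ∈ Af ∪ Bf, hCost H y1 y2 φ2 z.2)
        - ∑ z ∈ Af ∪ Bf, (if z.1 ∈ Rside G x1 x2 ∧ z.2 ∈ Rside H y1 y2 then (1:ℝ) else 0) := by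
      rw [hg]
      rw [Finset.sum_sub_distrib, Finset.sum_add_distrib]
    rw [hsplit]
    -- first sum
    have hT1 : ∑ z ∈ Af ∪ Bf, hCost G x1 x2 φ1 z.1 = ((dH : ℝ) + 1) * cost G x1 x2 φ1 := by
      rw [← Finset.sum_subset (Finset.subset_union_left (s₁ := Af) (s₂ := Bf)) ?van]
      case van =>
        intro z hz hzA
        rcases Finset.mem_union.1 hz with h | h
        · exact absurd h hzA
        · rcases Finset.mem_product.1 h with ⟨h1, h2⟩
          have : z.1 ∉ Rside G x1 x2 := by
            intro hm
            exact hzA (Finset.mem_product.2 ⟨Set.mem_toFinset.2 hm,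
              Set.mem_toFinset.2 (Rside_subset_closedNbr (Set.mem_toFinset.1 h2))⟩)
          exact dif_neg this
      rw [hAf, Finset.sum_product]
      simp only [Finset.sum_const, nsmul_eq_mul]
      rw [← Finset.mul_sum, sum_hCost φ1, card_closedNbr_toFinset, hH y1]
      push_cast
      ring
    -- second sum
    have hT2 : ∑ z ∈ Af ∪ Bf, hCost H y1 y2 φ2 z.2 = ((dG : ℝ) + 1) * cost H y1 y2 φ2 := by
      rw [← Finset.sum_subset (Finset.subset_union_right (s₁ := Af) (s₂ := Bf)) ?van]
      case van =>
        intro z hz hzB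
        rcases Finset.mem_union.1 hz with h | h
        · rcases Finset.mem_product.1 h with ⟨h1, h2⟩
          have : z.2 ∉ Rside H y1 y2 := by
            intro hm
            exact hzB (Finset.mem_product.2 ⟨Set.mem_toFinset.2
              (Rside_subset_closedNbr (Set.mem_toFinset.1 h1)), Set.mem_toFinset.2 hm⟩)
          exact dif_neg this
        · exact absurd h hzB
      rw [hBf, Finset.sum_product]
      simp only [Finset.sum_const, nsmul_eq_mul]
      rw [sum_hCost φ2, card_closedNbr_toFinset, hG x1]
      push_cast
      ring
    -- third sum
    have hCsub : Cf ⊆ Af ∪ Bf := by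
      refine Finset.Subset.trans ?_ Finset.subset_union_left
      rw [hCf, hAf]
      refine Finset.product_subset_product (Finset.Subset.refl _) ?_
      intro c hcm
      exact Set.mem_toFinset.2 (Rside_subset_closedNbr (Set.mem_toFinset.1 hcm))
    have hT3 : ∑ z ∈ Af ∪ Bf,
        (if z.1 ∈ Rside G x1 x2 ∧ z.2 ∈ Rside H y1 y2 then (1:ℝ) else 0) =
        ((Rside G x1 x2).toFinset.card : ℝ) * ((Rside H y1 y2).toFinset.card : ℝ) := by
      rw [← Finset.sum_subset hCsub ?van]
      case van =>
        intro z hz hzC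
        refine if_neg fun hm => hzC ?_
        rw [hCf]
        exact Finset.mem_product.2 ⟨Set.mem_toFinset.2 hm.1, Set.mem_toFinset.2 hm.2⟩
      rw [Finset.sum_congr rfl (fun z hzC => if_pos ?_)]
      · rw [Finset.sum_const, hCf, Finset.card_product, nsmul_eq_mul]
        push_cast
        ring
      · rcases Finset.mem_product.1 (hCf ▸ hzC) with ⟨h1, h2⟩
        exact ⟨Set.mem_toFinset.1 h1, Set.mem_toFinset.1 h2⟩
    rw [hT1, hT2, hT3, hφ1, hφ2]
    have c1 : (Nat.card ↥(Rside G x1 x2) : ℝ) = ((Rside G x1 x2).toFinset.card : ℝ) := by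
      rw [Nat.card_coe_set_eq, Set.ncard_eq_toFinset_card']
    have c2 : (Nat.card ↥(Rside H y1 y2) : ℝ) = ((Rside H y1 y2).toFinset.card : ℝ) := by
      rw [Nat.card_coe_set_eq, Set.ncard_eq_toFinset_card']
    rw [c1, c2]
    linarith
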